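/- The backward-lifted TSP-optimality cut x(A(P)) + x(∪_{h=2}^{p} Δ⁻_h(P)) ≤ |A(P)| - 1 is valid for every feasible solution of F-CVRP-TSP, where Δ⁻_h(P) = Δ^{E,-}_h(P) ∪ Δ^{TSP,-}_h(P) ∪ Δ^{Q,-}_h(P). -/

import Mathlib

variable {V : Type*}

/-- The list of arcs (consecutive node pairs) of a node list. -/
def arcsOf (l : List V) : List (V × V) := l.zip l.tail

/-- The length of a path given as a node list: the sum of its arc distances. -/
def plen (d : V → V → ℝ) (l : List V) : ℝ :=
  ((arcsOf l).map (fun a => d a.1 a.2)).sum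

/-- A path is TSP-violating if some path on the same node set with
the same endpoints is strictly shorter. -/
def TSPviolating (d : V → V → ℝ) (P : List V) : Prop :=
  ∃ Q : List V, Q.Perm P ∧ Q.head? = P.head? ∧ Q.getLast? = P.getLast? ∧
    plen d Q < plen d P

/-- Length of the route visiting customers `c` in order,
starting and ending at the depot. -/
def routeLen (d : V → V → ℝ) (depot : V) (c : List V) : ℝ :=
  plen d (depot :: c ++ [depot])

/-- A route (given by its ordered customer list) is TSP-optimal:
no reordering of its customers gives a strictly shorter route. -/
def TSPopt (d : V → V → ℝ) (depot : V) (c : List V) : Prop :=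
  ∀ c' : List V, c'.Perm c → routeLen d depot c ≤ routeLen d depot c'

/-- Arc flow of a set of selected routes: the number of selected routes using arc `a`. -/
def flow [DecidableEq V] (depot : V) (routes : List (List V)) (a : V × V) : ℤ :=
  (routes.map (fun c => ((arcsOf (depot :: c ++ [depot])).count a : ℤ))).sum

/-- The node list `[v 1, …, v p]` of an indexed path. -/
def pathList (v : ℕ → V) (p : ℕ) : List V := (List.range p).map (fun i => v (i + 1))

/-- The node list `[v h, …, v p]` of a suffix of an indexed path. -/
def suffixList (v : ℕ → V) (h p : ℕ) : List V :=
  (List.range (p + 1 - h)).map (fun i => v (h + i))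

/-- Backward elementarity lifting set `Δ^{E,-}_h(P)`. -/
def deltaEB (depot : V) (v : ℕ → V) (h p : ℕ) : Set (V × V) :=
  {a | ∃ j, h + 1 ≤ j ∧ j ≤ p ∧ a = (v j, v h) ∧ v j ≠ depot}

/-- Backward TSP-optimality lifting set `Δ^{TSP,-}_h(P)`. -/
def deltaTSPB (d : V → V → ℝ) (v : ℕ → V) (h p : ℕ) : Set (V × V) :=
  {a | ∃ j : V, (∀ i, h - 1 ≤ i → i ≤ p → j ≠ v i) ∧ a = (j, v h) ∧
    TSPviolating d (j :: suffixList v h p)}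

/-- Backward capacity lifting set `Δ^{Q,-}_h(P)`. -/
def deltaQB (dem : V → ℝ) (Qcap : ℝ) (v : ℕ → V) (h p : ℕ) : Set (V × V) :=
  {a | ∃ j : V, (∀ i, h - 1 ≤ i → i ≤ p → j ≠ v i) ∧ a = (j, v h) ∧
    Qcap < dem j + ∑ i ∈ Finset.Icc h p, dem (v i)}

/-!
Group the arcs of the cut by their head: for `2 ≤ h ≤ p`, the path arc `(v (h - 1), v h)` and
the arcs of `Δ⁻_h(P)` all enter `v h`. A customer is entered exactly once, so such a group carries
flow at most 1. If `v h` is the depot then `h = p`; no arc of `Δ⁻_p(P)` can be used, and the path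
arc carries flow at most 1 because `v (p - 1)` is left exactly once.

It remains to see that some group carries no flow. Otherwise, walking backward from `v p`, the
used arc entering `v h` extends the part `v h, …, v p` already found on a route (a customer lies
on a single route, once, so its predecessor there is unique), and it cannot lie in `Δ⁻_h(P)`: an
arc of `Δ^{E,-}_h` would repeat a customer, one of `Δ^{TSP,-}_h` would make a TSP-optimal route
contain a TSP-violating subpath, and one of `Δ^{Q,-}_h` would exceed the capacity. So it is
`(v (h - 1), v h)`, and in the end `P` itself is a subpath of a TSP-optimal route, which is
impossible since `P` is TSP-violating.
-/

namespace List

variable {α : Type*}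

theorem cons_cons_infix_of_count_le_one [DecidableEq α] {x y : α} {l : List α} :
    ∀ {L : List α}, L.count y ≤ 1 → y :: l <:+: L → [x, y] <:+: L → x :: y :: l <:+: L
  | [], _, h, _ => absurd h (by simp)
  | a :: L, hc, hyl, hxy => by
    have notMem_of_count_le_one : ∀ {M : List α}, (y :: M).count y ≤ 1 → y ∉ M := fun hM hyM => by
      have := count_pos_iff.2 hyM
      rw [count_cons_self] at hM
      omega
    have hcL : L.count y ≤ 1 := hc.trans' (count_le_count_cons ..)
    rw [infix_cons_iff] at hyl hxy
    rcases hxy with hxy | hxy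
    · obtain ⟨rfl, hyL⟩ := cons_prefix_cons.1 hxy
      obtain ⟨L', rfl⟩ : ∃ L', L = y :: L' := by
        cases L with
        | nil => simp at hyL
        | cons b L' => exact ⟨L', by simp_all⟩
      rcases hyl with hyl | hyl
      · obtain rfl := (cons_prefix_cons.1 hyl).1
        exact absurd mem_cons_self (notMem_of_count_le_one hc)
      rcases infix_cons_iff.1 hyl with hyl | hyl
      · exact (cons_prefix_cons.2 ⟨rfl, hyl⟩).isInfix
      · exact absurd (hyl.subset mem_cons_self) (notMem_of_count_le_one hcL)
    · rcases hyl with hyl | hyl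
      · obtain rfl := (cons_prefix_cons.1 hyl).1
        exact absurd (hxy.subset (by simp)) (notMem_of_count_le_one hc)
      · exact infix_cons (cons_cons_infix_of_count_le_one hcL hyl hxy)

theorem eq_of_mem_of_sum_map_count_eq_one [DecidableEq α] {L : List (List α)}
    {u : α} (hL : (L.map fun c => (c.count u : ℤ)).sum = 1) {c c' : List α} (hc : c ∈ L)
    (hc' : c' ∈ L) (hu : u ∈ c) (hu' : u ∈ c') : c = c' := by
  by_contra hne
  let R : List α → List α → Prop := fun c c' => u ∉ c ∨ u ∉ c'
  have : Std.Symm R := ⟨fun _ _ h => h.symm⟩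
  have hpair : L.Pairwise R := pairwise_of_forall_sublist fun {a b} hab => by
    have hle := (hab.map fun c => (c.count u : ℤ)).sum_le_sum fun _ hx => by
      obtain ⟨_, _, rfl⟩ := mem_map.1 hx
      positivity
    simp only [map_cons, map_nil, sum_cons, sum_nil, add_zero, hL] at hle
    show u ∉ a ∨ u ∉ b
    by_contra! hab'
    have := count_pos_iff.2 hab'.1
    have := count_pos_iff.2 hab'.2
    omega
  exact (hpair.forall hc hc' hne).elim (· hu) (· hu')

theorem finsum_mem_count [DecidableEq α] (l : List α) (s : Set α)
    [DecidablePred (· ∈ s)] : ∑ᶠ a ∈ s, (l.count a : ℤ) = l.countP (· ∈ s) := by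
  rw [finsum_mem_eq_sum_of_inter_support_eq _ (t := {a ∈ l.toFinset | a ∈ s}),
    ← Finset.sum_filter_count_eq_countP]
  · push_cast; rfl
  · ext a
    simp [count_eq_zero, and_comm]

end List

theorem finsum_mem_biUnion_of_support_finite {α ι M : Type*} [AddCommMonoid M] {f : α → M}
    (hf : (Function.support f).Finite) {I : Set ι} {t : ι → Set α} (h : I.PairwiseDisjoint t)
    (hI : I.Finite) : ∑ᶠ a ∈ ⋃ i ∈ I, t i, f a = ∑ᶠ i ∈ I, ∑ᶠ a ∈ t i, f a := by
  rw [← finsum_mem_inter_support, Set.iUnion₂_inter,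
    finsum_mem_biUnion (h.mono fun _ => Set.inter_subset_left) hI
      fun _ _ => hf.subset Set.inter_subset_right]
  simp_rw [finsum_mem_inter_support]

theorem Finset.sum_le_card_sub_one {ι : Type*} {s : Finset ι} {g : ι → ℤ}
    (hle : ∀ i ∈ s, g i ≤ 1) {i₀ : ι} (hi₀ : i₀ ∈ s) (hg : g i₀ ≤ 0) :
    ∑ i ∈ s, g i ≤ s.card - 1 := by
  classical
  rw [← Finset.add_sum_erase s g hi₀]
  have := Finset.sum_le_card_nsmul (s.erase i₀) g 1 fun i hi => hle i (Finset.mem_of_mem_erase hi)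
  rw [Finset.card_erase_of_mem hi₀, nsmul_eq_mul, mul_one,
    Nat.cast_sub (Finset.card_pos.2 ⟨i₀, hi₀⟩), Nat.cast_one] at this
  linarith

theorem Finset.sum_Icc_succ_shift {M : Type*} [AddCommMonoid M] (f : ℕ → M) (p : ℕ) :
    ∑ h ∈ Finset.Icc 1 (p - 1), f (h + 1) = ∑ h ∈ Finset.Icc 2 p, f h := by
  refine Finset.sum_nbij' (· + 1) (· - 1) ?_ ?_ ?_ ?_ fun _ _ => rfl <;>
    intro h hh <;> simp only [Finset.mem_Icc] at hh ⊢ <;> omega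

theorem arcsOf_cons_cons (a b : V) (l : List V) :
    arcsOf (a :: b :: l) = (a, b) :: arcsOf (b :: l) := rfl

theorem infix_of_mem_arcsOf {x y : V} : ∀ {l : List V}, (x, y) ∈ arcsOf l → [x, y] <:+: l
  | [], h | [_], h => by simp [arcsOf] at h
  | a :: b :: l, h => by
    rcases List.mem_cons.1 h with h | h
    · obtain ⟨rfl, rfl⟩ := Prod.mk.inj h
      exact (List.prefix_append [x, y] l).isInfix
    · exact List.infix_cons (infix_of_mem_arcsOf h)

theorem countP_arcsOf_snd [DecidableEq V] (y : V) :
    ∀ l : List V, (arcsOf l).countP (fun a => a.2 = y) = l.tail.count y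
  | [] | [_] => rfl
  | a :: b :: l => by
    rw [arcsOf_cons_cons, List.countP_cons, countP_arcsOf_snd y (b :: l)]
    simp [List.count_cons]

theorem countP_arcsOf_fst [DecidableEq V] (x : V) :
    ∀ l : List V, (arcsOf l).countP (fun a => a.1 = x) = l.dropLast.count x
  | [] | [_] => rfl
  | a :: b :: l => by
    rw [arcsOf_cons_cons, List.countP_cons, countP_arcsOf_fst x (b :: l), List.dropLast_cons_cons]
    simp [List.count_cons]

theorem plen_cons_cons (d : V → V → ℝ) (a b : V) (l : List V) :
    plen d (a :: b :: l) = d a b + plen d (b :: l) := by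
  simp [plen, arcsOf_cons_cons]

theorem plen_append_cons (d : V → V → ℝ) (a : V) (m : List V) :
    ∀ l : List V, plen d (l ++ a :: m) = plen d (l ++ [a]) + plen d (a :: m)
  | [] => by simp [plen, arcsOf]
  | [b] => by simp [plen, arcsOf]
  | b :: c :: l => by
    simp only [List.cons_append, plen_cons_cons]
    rw [← List.cons_append, plen_append_cons d a m (c :: l), List.cons_append]
    ring

theorem plen_append_append (d : V → V → ℝ) (s t : List V) {P : List V} {a b : V}
    (ha : P.head? = some a) (hb : P.getLast? = some b) :
    plen d (s ++ P ++ t) = plen d (s ++ [a]) + plen d P + plen d (b :: t) := by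
  obtain ⟨P', rfl⟩ := List.head?_eq_some_iff.1 ha
  obtain ⟨P'', hP''⟩ := List.getLast?_eq_some_iff.1 hb
  have hsplit : plen d (a :: P' ++ t) = plen d (a :: P') + plen d (b :: t) := by
    rw [hP'', List.append_assoc, List.singleton_append, plen_append_cons]
  rw [List.append_assoc, List.cons_append, plen_append_cons, ← List.cons_append, hsplit, add_assoc]

theorem TSPviolating.of_infix {d : V → V → ℝ} {P L : List V} (hP : TSPviolating d P)
    (hPL : P <:+: L) : TSPviolating d L := by
  obtain ⟨Q, hperm, hhead, hlast, hlt⟩ := hP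
  obtain ⟨s, t, rfl⟩ := hPL
  cases P with
  | nil => simp [List.perm_nil.1 hperm] at hlt
  | cons a P =>
    have hb := List.getLast?_eq_some_getLast (List.cons_ne_nil a P)
    refine ⟨s ++ Q ++ t, by simpa using (hperm.append_right t).append_left s,
      by simp [hhead], by simp only [List.getLast?_append, hlast], ?_⟩
    rw [plen_append_append d s t hhead (hlast.trans hb), plen_append_append d s t rfl hb]
    linarith

theorem TSPopt.not_TSPviolating {d : V → V → ℝ} {depot : V} {c : List V}
    (hc : TSPopt d depot c) : ¬ TSPviolating d (depot :: c ++ [depot]) := by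
  rintro ⟨Q, hperm, hhead, hlast, hlt⟩
  obtain ⟨Q, rfl⟩ := List.head?_eq_some_iff.1 (hhead.trans rfl)
  have hQ : Q ≠ [] := by
    rintro rfl
    simpa using hperm.length_eq
  have hQlast : Q.getLast hQ = depot := by
    simpa [List.getLast?_cons, List.getLast?_eq_some_getLast hQ] using hlast
  obtain ⟨c', rfl⟩ : ∃ c', Q = c' ++ [depot] := List.getLast?_eq_some_iff.1 <| by
    rw [List.getLast?_eq_some_getLast hQ, hQlast]
  have hc' : c'.Perm c := (List.perm_append_right_iff _).1 (by simpa using hperm)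
  exact (hc c' hc').not_gt hlt

structure IsFeasibleRoute (d : V → V → ℝ) (depot : V) (dem : V → ℝ) (Qcap : ℝ) (c : List V) :
    Prop where
  nodup : c.Nodup
  cap : (c.map dem).sum ≤ Qcap
  opt : TSPopt d depot c

section Flow

variable [DecidableEq V] (depot : V) (routes : List (List V))

def arcList : List (V × V) := routes.flatMap fun c => arcsOf (depot :: c ++ [depot])

theorem flow_eq_count (a : V × V) : flow depot routes a = (arcList depot routes).count a := by
  rw [flow, arcList, List.count_flatMap]
  push_cast [Nat.cast_list_sum, List.map_map]
  rfl

theorem finsum_mem_flow (s : Set (V × V)) [DecidablePred (· ∈ s)] :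
    ∑ᶠ a ∈ s, flow depot routes a = (arcList depot routes).countP (· ∈ s) := by
  rw [← List.finsum_mem_count]
  refine finsum_mem_congr rfl fun a _ => (flow_eq_count depot routes a).trans ?_
  -- `flow` counts with the `BEq` instance of pairs, `List.finsum_mem_count` with the one of `=`
  congr 2
  exact lawful_beq_subsingleton _ _

theorem support_flow_finite : (Function.support (flow depot routes)).Finite :=
  (arcList depot routes).toFinset.finite_toSet.subset fun a ha => by
    simpa [flow_eq_count, List.count_eq_zero] using ha

theorem countP_arcList_snd {y : V} (hy : y ≠ depot) :
    ((arcList depot routes).countP (fun a => a.2 = y) : ℤ) =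
      (routes.map fun c => (c.count y : ℤ)).sum := by
  rw [arcList, List.countP_flatMap]
  push_cast [Nat.cast_list_sum, List.map_map]
  congr 1
  refine List.map_congr_left fun c _ => ?_
  simp [countP_arcsOf_snd, List.count_append, hy.symm]

theorem countP_arcList_fst {x : V} (hx : x ≠ depot) :
    ((arcList depot routes).countP (fun a => a.1 = x) : ℤ) =
      (routes.map fun c => (c.count x : ℤ)).sum := by
  rw [arcList, List.countP_flatMap]
  push_cast [Nat.cast_list_sum, List.map_map]
  congr 1
  refine List.map_congr_left fun c _ => ?_
  simp only [Function.comp_apply]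
  rw [countP_arcsOf_fst, List.dropLast_concat, List.count_cons]
  simp [hx.symm]

end Flow

section Suffix

variable (v : ℕ → V)

theorem suffixList_eq_cons {k p : ℕ} (hk : k ≤ p) :
    suffixList v k p = v k :: suffixList v (k + 1) p := by
  rw [suffixList, suffixList, show p + 1 - k = p + 1 - (k + 1) + 1 by omega,
    List.range_succ_eq_map, List.map_cons, List.map_map]
  congr 2
  funext i
  simp [Nat.add_right_comm, Nat.add_assoc]

theorem suffixList_self (p : ℕ) : suffixList v p p = [v p] := by
  simp [suffixList]

theorem suffixList_one (p : ℕ) : suffixList v 1 p = pathList v p := by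
  simp [suffixList, pathList, Nat.add_comm]

theorem mem_suffixList {k p m : ℕ} (hkm : k ≤ m) (hmp : m ≤ p) : v m ∈ suffixList v k p :=
  List.mem_map.2 ⟨m - k, List.mem_range.2 (by omega), by rw [Nat.add_sub_cancel' hkm]⟩

theorem sum_map_suffixList (dem : V → ℝ) (k p : ℕ) :
    ((suffixList v k p).map dem).sum = ∑ i ∈ Finset.Icc k p, dem (v i) := by
  have hrange : ((suffixList v k p).map dem).sum =
      ∑ i ∈ Finset.range (p + 1 - k), dem (v (k + i)) := by
    rw [suffixList, List.map_map]
    rfl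
  rw [hrange, ← Finset.Ico_add_one_right_eq_Icc, Finset.sum_Ico_eq_sum_range]

end Suffix

section Lifting

variable (d : V → V → ℝ) (depot : V) (dem : V → ℝ) (Qcap : ℝ) (v : ℕ → V)

def deltaB (h p : ℕ) : Set (V × V) :=
  deltaEB depot v h p ∪ deltaTSPB d v h p ∪ deltaQB dem Qcap v h p

def cutArcs (h p : ℕ) : Set (V × V) := insert (v (h - 1), v h) (deltaB d depot dem Qcap v h p)

variable {d depot dem Qcap v}

theorem snd_eq_of_mem_deltaB {h p : ℕ} {a : V × V} (ha : a ∈ deltaB d depot dem Qcap v h p) :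
    a.2 = v h := by
  rcases ha with (⟨j, -, -, rfl, -⟩ | ⟨j, -, rfl, -⟩) | ⟨j, -, rfl, -⟩ <;> rfl

theorem pred_arc_notMem_deltaB {h p : ℕ}
    (hinj : ∀ i j, 1 ≤ i → i ≤ p → 1 ≤ j → j ≤ p → v i = v j → i = j) (h2 : 2 ≤ h) (hp : h ≤ p) :
    (v (h - 1), v h) ∉ deltaB d depot dem Qcap v h p := by
  rintro ((⟨j, hj, hjp, heq, -⟩ | ⟨j, hj, heq, -⟩) | ⟨j, hj, heq, -⟩)
  · have := hinj _ _ (by omega) (by omega) (by omega) hjp (Prod.mk.inj heq).1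
    omega
  all_goals exact hj (h - 1) le_rfl (by omega) (Prod.mk.inj heq).1.symm

theorem notMem_deltaB_of_cons_infix [DecidableEq V] (hdem0 : dem depot = 0)
    (hdem : ∀ u, 0 ≤ dem u) {c : List V} (hc : IsFeasibleRoute d depot dem Qcap c)
    {x : V} {h p : ℕ} (hx : x :: suffixList v h p <:+: depot :: c ++ [depot]) :
    (x, v h) ∉ deltaB d depot dem Qcap v h p := by
  rintro ((⟨j, hj, hjp, heq, hjd⟩ | ⟨j, -, heq, hviol⟩) | ⟨j, -, heq, hQ⟩)
  · obtain rfl : x = v j := (Prod.mk.inj heq).1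
    have htwice : 2 ≤ (v j :: suffixList v h p).count (v j) := by
      rw [List.count_cons_self, Nat.succ_le_succ_iff, Nat.one_le_iff_ne_zero, Ne,
        List.count_eq_zero, not_not]
      exact mem_suffixList v (by omega) hjp
    have hwalk : (depot :: c ++ [depot]).count (v j) ≤ 1 := by
      simpa [List.count_cons, List.count_append, hjd, Ne.symm hjd] using
        List.nodup_iff_count_le_one.1 hc.nodup (v j)
    have := hx.sublist.count_le (v j)
    omega
  · obtain rfl : x = j := (Prod.mk.inj heq).1
    exact hc.opt.not_TSPviolating (hviol.of_infix hx)
  · obtain rfl : x = j := (Prod.mk.inj heq).1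
    have hsum := (hx.sublist.map dem).sum_le_sum fun _ ha => by
      obtain ⟨u, -, rfl⟩ := List.mem_map.1 ha
      exact hdem u
    simp only [List.map_cons, List.sum_cons, sum_map_suffixList, List.map_append, List.sum_append,
      List.map_nil, List.sum_nil, hdem0] at hsum
    linarith [hc.cap]

theorem snd_eq_of_mem_cutArcs {h p : ℕ} {a : V × V} (ha : a ∈ cutArcs d depot dem Qcap v h p) :
    a.2 = v h := by
  rcases ha with rfl | ha
  exacts [rfl, snd_eq_of_mem_deltaB ha]

theorem suffixList_pred_infix [DecidableEq V] (hdem0 : dem depot = 0) (hdem : ∀ u, 0 ≤ dem u)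
    {c : List V} (hc : IsFeasibleRoute d depot dem Qcap c) {x : V} {h p : ℕ} (h1 : 1 ≤ h)
    (hp : h ≤ p) (ha : (x, v h) ∈ cutArcs d depot dem Qcap v h p)
    (hx : x :: suffixList v h p <:+: depot :: c ++ [depot]) :
    suffixList v (h - 1) p <:+: depot :: c ++ [depot] := by
  rcases ha with heq | ha
  · rwa [suffixList_eq_cons v (by omega), Nat.sub_add_cancel h1, ← (Prod.mk.inj heq).1]
  · exact absurd ha (notMem_deltaB_of_cons_infix hdem0 hdem hc hx)

variable [DecidableEq V] {routes : List (List V)} {p : ℕ}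

theorem exists_route_suffixList_infix (hdem0 : dem depot = 0) (hdem : ∀ u, 0 ≤ dem u)
    (hroutes : ∀ c ∈ routes, IsFeasibleRoute d depot dem Qcap c)
    (hcover : ∀ u, u ≠ depot → (routes.map fun c => (c.count u : ℤ)).sum = 1)
    (hmid : ∀ i, 2 ≤ i → i ≤ p - 1 → v i ≠ depot)
    (hused : ∀ h, 2 ≤ h → h ≤ p → ∃ a ∈ arcList depot routes, a ∈ cutArcs d depot dem Qcap v h p)
    {h : ℕ} (h2 : 2 ≤ h) (hp : h ≤ p) :
    ∃ c ∈ routes, suffixList v (h - 1) p <:+: depot :: c ++ [depot] := by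
  induction hp using Nat.decreasingInduction with
  | self =>
    obtain ⟨⟨x, y⟩, ha, hG⟩ := hused p h2 le_rfl
    obtain rfl : y = v p := snd_eq_of_mem_cutArcs hG
    obtain ⟨c, hc, hxc⟩ := List.mem_flatMap.1 ha
    refine ⟨c, hc, suffixList_pred_infix hdem0 hdem (hroutes c hc) (by omega) le_rfl hG ?_⟩
    rw [suffixList_self]
    exact infix_of_mem_arcsOf hxc
  | of_succ h hlt ih =>
    obtain ⟨c, hc, hsuf⟩ := ih (by omega)
    obtain ⟨⟨x, y⟩, ha, hG⟩ := hused h h2 hlt.le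
    obtain rfl : y = v h := snd_eq_of_mem_cutArcs hG
    obtain ⟨c', hc', hxc'⟩ := List.mem_flatMap.1 ha
    have hvh : v h ≠ depot := hmid h h2 (by omega)
    rw [Nat.add_sub_cancel, suffixList_eq_cons v hlt.le] at hsuf
    have hmem : v h ∈ c := by
      simpa [hvh] using hsuf.subset List.mem_cons_self
    obtain rfl : c = c' := List.eq_of_mem_of_sum_map_count_eq_one (hcover _ hvh) hc hc' hmem
      (by simpa [hvh] using (List.of_mem_zip hxc').2)
    have hcount : (depot :: c ++ [depot]).count (v h) ≤ 1 := by
      simpa [List.count_cons, List.count_append, hvh, Ne.symm hvh] using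
        List.nodup_iff_count_le_one.1 (hroutes c hc).nodup (v h)
    refine ⟨c, hc, suffixList_pred_infix hdem0 hdem (hroutes c hc) (by omega) hlt.le hG ?_⟩
    rw [suffixList_eq_cons v hlt.le]
    exact List.cons_cons_infix_of_count_le_one hcount hsuf (infix_of_mem_arcsOf hxc')

end Lifting

section Cut

variable {d : V → V → ℝ} {depot : V} {dem : V → ℝ} {Qcap : ℝ} {v : ℕ → V} [DecidableEq V]
  {routes : List (List V)} {p : ℕ}

theorem cut_lhs_eq_sum_cutArcs
    (hinj : ∀ i j, 1 ≤ i → i ≤ p → 1 ≤ j → j ≤ p → v i = v j → i = j) :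
    (∑ h ∈ Finset.Icc 1 (p - 1), flow depot routes (v h, v (h + 1)))
      + ∑ᶠ a ∈ ⋃ h ∈ Set.Icc 2 p, deltaB d depot dem Qcap v h p, flow depot routes a
      = ∑ h ∈ Finset.Icc 2 p, ∑ᶠ a ∈ cutArcs d depot dem Qcap v h p, flow depot routes a := by
  have hfin := support_flow_finite depot routes
  have hdisj : (Set.Icc 2 p).PairwiseDisjoint (deltaB d depot dem Qcap v · p) :=
    fun h hh h' hh' hne => Set.disjoint_left.2 fun a ha ha' => hne <|
      hinj h h' (one_le_two.trans hh.1) hh.2 (one_le_two.trans hh'.1) hh'.2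
        ((snd_eq_of_mem_deltaB ha).symm.trans (snd_eq_of_mem_deltaB ha'))
  have hpred := Finset.sum_Icc_succ_shift (fun h => flow depot routes (v (h - 1), v h)) p
  simp only [Nat.add_sub_cancel] at hpred
  rw [finsum_mem_biUnion_of_support_finite hfin hdisj (Set.finite_Icc 2 p), ← Finset.coe_Icc,
    finsum_mem_coe_finset, hpred, ← Finset.sum_add_distrib]
  refine Finset.sum_congr rfl fun h hh => ?_
  rw [Finset.mem_Icc] at hh
  rw [cutArcs, finsum_mem_insert' _ (pred_arc_notMem_deltaB hinj hh.1 hh.2)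
    (hfin.subset Set.inter_subset_right)]

theorem finsum_mem_cutArcs_flow_le_one (hdem0 : dem depot = 0) (hdem : ∀ u, 0 ≤ dem u)
    (hroutes : ∀ c ∈ routes, IsFeasibleRoute d depot dem Qcap c)
    (hcover : ∀ u, u ≠ depot → (routes.map fun c => (c.count u : ℤ)).sum = 1)
    (hinj : ∀ i j, 1 ≤ i → i ≤ p → 1 ≤ j → j ≤ p → v i = v j → i = j)
    (hmid : ∀ i, 2 ≤ i → i ≤ p - 1 → v i ≠ depot) {h : ℕ} (h2 : 2 ≤ h) (hp : h ≤ p) :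
    ∑ᶠ a ∈ cutArcs d depot dem Qcap v h p, flow depot routes a ≤ 1 := by
  classical
  rw [finsum_mem_flow]
  by_cases hvh : v h = depot
  · -- then `h = p`, no arc of `Δ⁻_p` is used, and only the out-degree of `v (p - 1)` counts
    obtain rfl : h = p := by
      by_contra hne
      exact hmid h h2 (by omega) hvh
    have hprev : v (h - 1) ≠ depot := fun heq => by
      have := hinj _ _ (by omega) (by omega) (by omega) le_rfl (heq.trans hvh.symm)
      omega
    rw [← hcover _ hprev, ← countP_arcList_fst depot routes hprev, Nat.cast_le]
    refine List.countP_mono_left fun ⟨x, y⟩ ha hG => ?_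
    simp only [decide_eq_true_eq] at hG ⊢
    obtain rfl : y = v h := snd_eq_of_mem_cutArcs hG
    obtain ⟨c, hc, hxc⟩ := List.mem_flatMap.1 ha
    rcases hG with heq | hΔ
    · exact (Prod.mk.inj heq).1
    · refine absurd hΔ (notMem_deltaB_of_cons_infix hdem0 hdem (hroutes c hc) ?_)
      rw [suffixList_self]
      exact infix_of_mem_arcsOf hxc
  · rw [← hcover _ hvh, ← countP_arcList_snd depot routes hvh, Nat.cast_le]
    refine List.countP_mono_left fun a _ hG => ?_
    simp only [decide_eq_true_eq] at hG ⊢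
    exact snd_eq_of_mem_cutArcs hG

theorem exists_finsum_mem_cutArcs_flow_eq_zero (hdem0 : dem depot = 0) (hdem : ∀ u, 0 ≤ dem u)
    (hroutes : ∀ c ∈ routes, IsFeasibleRoute d depot dem Qcap c)
    (hcover : ∀ u, u ≠ depot → (routes.map fun c => (c.count u : ℤ)).sum = 1)
    (hmid : ∀ i, 2 ≤ i → i ≤ p - 1 → v i ≠ depot) (hp : 2 ≤ p)
    (hviol : TSPviolating d (pathList v p)) :
    ∃ h ∈ Finset.Icc 2 p, ∑ᶠ a ∈ cutArcs d depot dem Qcap v h p, flow depot routes a = 0 := by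
  by_contra! hflow
  have hused : ∀ h, 2 ≤ h → h ≤ p →
      ∃ a ∈ arcList depot routes, a ∈ cutArcs d depot dem Qcap v h p := fun h h2 hp => by
    obtain ⟨a, hG, ha⟩ := exists_ne_zero_of_finsum_mem_ne_zero
      (hflow h (Finset.mem_Icc.2 ⟨h2, hp⟩))
    rw [flow_eq_count, Nat.cast_ne_zero, Ne, List.count_eq_zero, not_not] at ha
    exact ⟨a, ha, hG⟩
  obtain ⟨c, hc, hpath⟩ :=
    exists_route_suffixList_infix hdem0 hdem hroutes hcover hmid hused le_rfl hp
  rw [suffixList_one] at hpath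
  exact (hroutes c hc).opt.not_TSPviolating (hviol.of_infix hpath)

end Cut

theorem backward_lifted_cut_valid_general [DecidableEq V]
    (d : V → V → ℝ) (depot : V) (dem : V → ℝ) (Qcap : ℝ)
    (hdem0 : dem depot = 0) (hpos : ∀ u : V, u ≠ depot → 0 < dem u)
    (routes : List (List V))
    (hnd : ∀ c ∈ routes, c.Nodup)
    (hcap : ∀ c ∈ routes, (c.map dem).sum ≤ Qcap)
    (hcover : ∀ u : V, u ≠ depot → (routes.map (fun c => (c.count u : ℤ))).sum = 1)
    (hopt : ∀ c ∈ routes, TSPopt d depot c)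
    (p : ℕ) (hp : 2 ≤ p) (v : ℕ → V)
    (hinj : ∀ i j, 1 ≤ i → i ≤ p → 1 ≤ j → j ≤ p → v i = v j → i = j)
    (hmid : ∀ i, 2 ≤ i → i ≤ p - 1 → v i ≠ depot)
    (hviol : TSPviolating d (pathList v p)) :
    (∑ h ∈ Finset.Icc 1 (p - 1), flow depot routes (v h, v (h + 1)))
      + (∑ᶠ a ∈ (⋃ h ∈ Set.Icc 2 p,
            (deltaEB depot v h p ∪ deltaTSPB d v h p ∪ deltaQB dem Qcap v h p)),
          flow depot routes a)
      ≤ (p : ℤ) - 2 := by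
  have hdem : ∀ u, 0 ≤ dem u := fun u =>
    (eq_or_ne u depot).elim (fun hu => hu ▸ hdem0.ge) fun hu => (hpos u hu).le
  have hroutes : ∀ c ∈ routes, IsFeasibleRoute d depot dem Qcap c :=
    fun c hc => ⟨hnd c hc, hcap c hc, hopt c hc⟩
  obtain ⟨h₀, hh₀, hzero⟩ :=
    exists_finsum_mem_cutArcs_flow_eq_zero hdem0 hdem hroutes hcover hmid hp hviol
  calc _ = ∑ h ∈ Finset.Icc 2 p, ∑ᶠ a ∈ cutArcs d depot dem Qcap v h p, flow depot routes a :=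
        cut_lhs_eq_sum_cutArcs hinj
    _ ≤ (Finset.Icc 2 p).card - 1 := Finset.sum_le_card_sub_one (fun h hh =>
        finsum_mem_cutArcs_flow_le_one hdem0 hdem hroutes hcover hinj hmid
          (Finset.mem_Icc.1 hh).1 (Finset.mem_Icc.1 hh).2) hh₀ hzero.le
    _ = (p : ℤ) - 2 := by
        rw [Nat.card_Icc]
        omega

/-- the backward-lifted TSP-optimality cut
`x(A(P)) + x(⋃_{h=2}^{p} Δ⁻_h(P)) ≤ |A(P)| - 1` is valid for every feasible
solution of F-CVRP-TSP. -/
theorem backward_lifted_cut_valid [DecidableEq V]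
    (d : V → V → ℝ) (depot : V) (dem : V → ℝ) (Qcap : ℝ)
    (hdem0 : dem depot = 0) (hpos : ∀ u : V, u ≠ depot → 0 < dem u)
    (routes : List (List V))
    (hnd : ∀ c ∈ routes, c.Nodup) (hdep : ∀ c ∈ routes, depot ∉ c)
    (hne : ∀ c ∈ routes, c ≠ [])
    (hcap : ∀ c ∈ routes, (c.map dem).sum ≤ Qcap)
    (hcover : ∀ u : V, u ≠ depot → (routes.map (fun c => (c.count u : ℤ))).sum = 1)
    (hopt : ∀ c ∈ routes, TSPopt d depot c)
    (p : ℕ) (hp : 2 ≤ p) (v : ℕ → V)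
    (hinj : ∀ i j, 1 ≤ i → i ≤ p → 1 ≤ j → j ≤ p → v i = v j → i = j)
    (hmid : ∀ i, 2 ≤ i → i ≤ p - 1 → v i ≠ depot)
    (hviol : TSPviolating d (pathList v p)) :
    (∑ h ∈ Finset.Icc 1 (p - 1), flow depot routes (v h, v (h + 1)))
      + (∑ᶠ a ∈ (⋃ h ∈ Set.Icc 2 p,
            (deltaEB depot v h p ∪ deltaTSPB d v h p ∪ deltaQB dem Qcap v h p)),
          flow depot routes a)
      ≤ (p : ℤ) - 2 :=
  backward_lifted_cut_valid_general d depot dem Qcap hdem0 hpos routes hnd hcap hcover hopt p hp v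
    hinj hmid hviol
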